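/- arXiv:2409.19860 — 7 statements merged into one kernel-verified Lean document; each statement's English description precedes it below -/
import Mathlib

section
/- Let S = {1,…,m} be a finite set, q a pmf on S with q(i) > 0 for all i, and d ≥ 1. Every pmf p in the density-ratio ambiguity set A = { p : p(i)/q(i) ≤ 1+d for all i } also lies in the total-variation ball A_TV = { pmf p : Σ_{i∈S} q(i)·|p(i)/q(i) − 1| ≤ d }. -/
/-- For `d ≥ 1`, every pmf `p` in the density-ratio ambiguity set
`A = { p : p i / q i ≤ 1 + d for all i }` lies in the total-variation ball
`A_TV = { p : ∑ i, q i * |p i / q i - 1| ≤ d }`. -/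
theorem ambiguity_subset_tv_ball
    (m : ℕ) (q : Fin m → ℝ) (hq0 : ∀ i, 0 < q i) (hq1 : ∑ i, q i = 1)
    (d : ℝ) (hd : 1 ≤ d)
    (p : Fin m → ℝ) (hp0 : ∀ i, 0 ≤ p i) (hp1 : ∑ i, p i = 1)
    (hpA : ∀ i, p i / q i ≤ 1 + d) :
    ∑ i, q i * |p i / q i - 1| ≤ d := by
  have key : ∀ i, q i * |p i / q i - 1| ≤ d * q i := by
    intro i
    have hq := hq0 i
    have h1 : q i * |p i / q i - 1| = |p i - q i| := by
      rw [← abs_of_pos hq, ← abs_mul, abs_of_pos hq]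
      congr 1
      field_simp
    rw [h1]
    rw [abs_le]
    constructor
    · have : (1 - d) * q i ≤ p i := by
        have h2 : (1 - d) * q i ≤ 0 :=
          mul_nonpos_of_nonpos_of_nonneg (by linarith) hq.le
        linarith [hp0 i]
      nlinarith
    · have := (div_le_iff₀ hq).mp (hpA i)
      nlinarith
  calc ∑ i, q i * |p i / q i - 1| ≤ ∑ i, d * q i := Finset.sum_le_sum fun i _ => key i
    _ = d := by rw [← Finset.mul_sum, hq1, mul_one]
end

section
/- Let b, d ∈ ℝ with d > 0. The function (a, ν) ↦ (1+d)·a·exp((b − a − ν)/a) + ν is convex on the open half-space { (a, ν) ∈ ℝ² : a > 0 }. -/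
/-!
The map `(a, ν) ↦ a * exp ((b - a - ν) / a)` is the perspective `(a, x) ↦ a * exp (x / a)` of `exp`,
precomposed with the affine map `(a, ν) ↦ (a, b - a - ν)`. The perspective of a convex function is
convex on `a > 0`, because `(μ a₁ + ν a₂)⁻¹ (μ x₁ + ν x₂)` is the convex combination of `x₁ / a₁` and
`x₂ / a₂` with weights proportional to `μ a₁` and `ν a₂`.
-/

open Set

lemma inv_smul_combination_eq_weighted_inv_smul {𝕜 E : Type*} [Field 𝕜] [AddCommGroup E]
    [Module 𝕜 E] {a₁ a₂ μ ν : 𝕜} (ha₁ : a₁ ≠ 0) (ha₂ : a₂ ≠ 0) (hA : μ * a₁ + ν * a₂ ≠ 0)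
    (x₁ x₂ : E) :
    (μ * a₁ + ν * a₂)⁻¹ • (μ • x₁ + ν • x₂) =
      (μ * a₁ / (μ * a₁ + ν * a₂)) • (a₁⁻¹ • x₁) +
        (ν * a₂ / (μ * a₁ + ν * a₂)) • (a₂⁻¹ • x₂) := by
  match_scalars <;> field_simp

variable {𝕜 E : Type*} [Field 𝕜] [LinearOrder 𝕜] [IsStrictOrderedRing 𝕜]
  [AddCommGroup E] [Module 𝕜 E]

theorem ConvexOn.perspective {s : Set E} {f : E → 𝕜} (hf : ConvexOn 𝕜 s f) :
    ConvexOn 𝕜 {p : 𝕜 × E | 0 < p.1 ∧ p.1⁻¹ • p.2 ∈ s} (fun p => p.1 * f (p.1⁻¹ • p.2)) := by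
  have mem_and_le : ∀ ⦃a₁ a₂ : 𝕜⦄ {x₁ x₂ : E}, 0 < a₁ → 0 < a₂ → a₁⁻¹ • x₁ ∈ s → a₂⁻¹ • x₂ ∈ s →
      ∀ ⦃μ ν : 𝕜⦄, 0 ≤ μ → 0 ≤ ν → μ + ν = 1 →
      0 < μ * a₁ + ν * a₂ ∧ (μ * a₁ + ν * a₂)⁻¹ • (μ • x₁ + ν • x₂) ∈ s ∧
      (μ * a₁ + ν * a₂) * f ((μ * a₁ + ν * a₂)⁻¹ • (μ • x₁ + ν • x₂)) ≤
        μ * (a₁ * f (a₁⁻¹ • x₁)) + ν * (a₂ * f (a₂⁻¹ • x₂)) := by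
    intro a₁ a₂ x₁ x₂ ha₁ ha₂ hx₁ hx₂ μ ν hμ hν hμν
    set A := μ * a₁ + ν * a₂
    have hA : 0 < A := convex_Ioi 0 ha₁ ha₂ hμ hν hμν
    have hw₁ : 0 ≤ μ * a₁ / A := by positivity
    have hw₂ : 0 ≤ ν * a₂ / A := by positivity
    have hw : μ * a₁ / A + ν * a₂ / A = 1 := by rw [← add_div, div_self hA.ne']
    rw [inv_smul_combination_eq_weighted_inv_smul ha₁.ne' ha₂.ne' hA.ne']
    refine ⟨hA, hf.1 hx₁ hx₂ hw₁ hw₂ hw, ?_⟩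
    calc A * f ((μ * a₁ / A) • (a₁⁻¹ • x₁) + (ν * a₂ / A) • (a₂⁻¹ • x₂))
        ≤ A * ((μ * a₁ / A) • f (a₁⁻¹ • x₁) + (ν * a₂ / A) • f (a₂⁻¹ • x₂)) :=
          mul_le_mul_of_nonneg_left (hf.2 hx₁ hx₂ hw₁ hw₂ hw) hA.le
      _ = μ * (a₁ * f (a₁⁻¹ • x₁)) + ν * (a₂ * f (a₂⁻¹ • x₂)) := by
          simp only [smul_eq_mul]; field_simp
  refine ⟨?_, ?_⟩
  · rintro ⟨a₁, x₁⟩ ⟨ha₁, hx₁⟩ ⟨a₂, x₂⟩ ⟨ha₂, hx₂⟩ μ ν hμ hν hμν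
    exact (mem_and_le ha₁ ha₂ hx₁ hx₂ hμ hν hμν).imp_right And.left
  · rintro ⟨a₁, x₁⟩ ⟨ha₁, hx₁⟩ ⟨a₂, x₂⟩ ⟨ha₂, hx₂⟩ μ ν hμ hν hμν
    exact (mem_and_le ha₁ ha₂ hx₁ hx₂ hμ hν hμν).2.2

/-- For `d > 0` and `b : ℝ`, the function
`(a, ν) ↦ (1+d) * a * exp ((b - a - ν)/a) + ν` is convex on the open half-space
`{ (a, ν) : a > 0 }`. -/
theorem dual_term_convex_on_halfspace (b d : ℝ) (hd : 0 < d) :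
    ConvexOn ℝ {p : ℝ × ℝ | 0 < p.1}
      (fun p : ℝ × ℝ => (1 + d) * p.1 * Real.exp ((b - p.1 - p.2) / p.1) + p.2) := by
  let g : ℝ × ℝ →ᵃ[ℝ] ℝ × ℝ :=
    ⟨fun p => (p.1, b - p.1 - p.2),
      (LinearMap.fst ℝ ℝ ℝ).prod (-LinearMap.fst ℝ ℝ ℝ - LinearMap.snd ℝ ℝ ℝ),
      fun p v => by ext <;> simp; ring⟩
  have hpersp := (convexOn_exp.perspective.comp_affineMap g).smul (by linarith : (0 : ℝ) ≤ 1 + d)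
  have hdom : g ⁻¹' {p : ℝ × ℝ | 0 < p.1 ∧ p.1⁻¹ • p.2 ∈ univ} = {p : ℝ × ℝ | 0 < p.1} := by
    ext p; simp [g]
  rw [hdom] at hpersp
  refine (hpersp.add ((LinearMap.snd ℝ ℝ ℝ).convexOn (convex_halfSpace_gt ?_ 0))).congr ?_
  · exact (LinearMap.fst ℝ ℝ ℝ).isLinear
  · intro p _
    simp [g, div_eq_inv_mul, mul_assoc]
end

section
/- Let S = {1,…,m} be a finite set, q a pmf on S with q(i) > 0 for all i, d > 0, and c : S → ℝ. For λ ∈ (ℝ≥0)^m and ν ∈ ℝ, define d̃(i, λ_i, ν) ∈ ℝ ∪ {+∞} by: d̃ = ν if λ_i = 0 and c(i) ≤ ν; d̃ = (1+d)·λ_i·exp((c(i) − λ_i − ν)/λ_i) + ν if λ_i > 0; and d̃ = +∞ if λ_i = 0 and c(i) > ν. Then for every λ ∈ (ℝ≥0)^m and ν ∈ ℝ, the supremum over r ∈ (ℝ≥0)^m of Σ_{i∈S} q(i)·[ r_i·c(i) + λ_i·r_i·ln((1+d)/r_i) + ν·(1 − r_i) ] (with the convention that the middle term is 0 when r_i =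 0), taken in ℝ ∪ {+∞}, equals Σ_{i∈S} q(i)·d̃(i, λ_i, ν). -/
/-!
For `l > 0`, writing `A = (1+d) exp ((b-l-ν)/l)`, the `i`-th summand equals
`ν + l (r + r log (A / r))`; since `r log (A/r) ≤ A - r` it is maximised at `r = A` with value
`d̃`. For `l = 0` it is affine, `ν + r (b - ν)`, with supremum `ν` or `+∞`. Because the objective
is separable and `q > 0`, the supremum of the sum is the sum of the coordinatewise suprema:
either every coordinate attains its supremum, or one of them is unbounded along a ray.
-/

/-- The extended-real-valued dual integrand `d̃` of the paper: for cost value `b`,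
multiplier `l ≥ 0` and `ν : ℝ`,
`d̃ = ν` if `l = 0` and `b ≤ ν`; `d̃ = (1+d)*l*exp((b-l-ν)/l) + ν` if `l ≠ 0`;
`d̃ = +∞` if `l = 0` and `b > ν`. -/
noncomputable def dualIntegrand (d b l ν : ℝ) : EReal :=
  if l = 0 then (if b ≤ ν then ((ν : ℝ) : EReal) else ⊤)
  else (((1 + d) * l * Real.exp ((b - l - ν) / l) + ν : ℝ) : EReal)

open Real Finset

noncomputable def lagrangeanTerm (d b l ν r : ℝ) : ℝ :=
  r * b + l * (r * log ((1 + d) / r)) + ν * (1 - r)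

noncomputable def termMaximizer (d b l ν : ℝ) : ℝ :=
  (1 + d) * exp ((b - l - ν) / l)

lemma EReal.coe_finsetSum {ι : Type*} (s : Finset ι) (f : ι → ℝ) :
    ((∑ i ∈ s, f i : ℝ) : EReal) = ∑ i ∈ s, (f i : EReal) :=
  map_sum (⟨⟨((↑) : ℝ → EReal), EReal.coe_zero⟩, EReal.coe_add⟩ : ℝ →+ EReal) f s

lemma Real.mul_log_div_le_sub {A r : ℝ} (hA : 0 < A) (hr : 0 ≤ r) :
    r * log (A / r) ≤ A - r := by
  rcases hr.eq_or_lt with rfl | hr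
  · simpa using hA.le
  · calc r * log (A / r) ≤ r * (A / r - 1) :=
          mul_le_mul_of_nonneg_left (log_le_sub_one_of_pos (by positivity)) hr.le
      _ = A - r := by field_simp

lemma lagrangeanTerm_zero_right (d b l ν : ℝ) : lagrangeanTerm d b l ν 0 = ν := by
  simp [lagrangeanTerm]

lemma lagrangeanTerm_of_mult_eq_zero (d b ν r : ℝ) :
    lagrangeanTerm d b 0 ν r = ν + r * (b - ν) := by
  simp only [lagrangeanTerm]
  ring

lemma lagrangeanTerm_eq_of_mult_ne_zero {d b l ν : ℝ} (hd : 0 < 1 + d) (hl : l ≠ 0) (r : ℝ) :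
    lagrangeanTerm d b l ν r = ν + l * (r + r * log (termMaximizer d b l ν / r)) := by
  rcases eq_or_ne r 0 with rfl | hr
  · simp [lagrangeanTerm]
  have hlog : log (termMaximizer d b l ν / r) = log ((1 + d) / r) + (b - l - ν) / l := by
    rw [termMaximizer, mul_div_right_comm, log_mul (div_ne_zero hd.ne' hr) (exp_pos _).ne',
      log_exp]
  rw [lagrangeanTerm, hlog]
  field_simp
  ring

lemma lagrangeanTerm_le {d b l ν r : ℝ} (hd : 0 < 1 + d) (hl : 0 < l) (hr : 0 ≤ r) :
    lagrangeanTerm d b l ν r ≤ ν + l * termMaximizer d b l ν := by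
  have := mul_log_div_le_sub (A := termMaximizer d b l ν) (by unfold termMaximizer; positivity) hr
  rw [lagrangeanTerm_eq_of_mult_ne_zero hd hl.ne']
  gcongr
  linarith

lemma lagrangeanTerm_termMaximizer {d b l ν : ℝ} (hd : 0 < 1 + d) (hl : l ≠ 0) :
    lagrangeanTerm d b l ν (termMaximizer d b l ν) = ν + l * termMaximizer d b l ν := by
  have hA : termMaximizer d b l ν ≠ 0 := by unfold termMaximizer; positivity
  rw [lagrangeanTerm_eq_of_mult_ne_zero hd hl, div_self hA, log_one, mul_zero, add_zero]

lemma dualIntegrand_of_mult_ne_zero {d b l ν : ℝ} (hl : l ≠ 0) :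
    dualIntegrand d b l ν = ((ν + l * termMaximizer d b l ν : ℝ) : EReal) := by
  rw [dualIntegrand, if_neg hl, termMaximizer]
  ring_nf

lemma lagrangeanTerm_le_dualIntegrand {d b l ν r : ℝ} (hd : 0 < 1 + d) (hl : 0 ≤ l)
    (hr : 0 ≤ r) : (lagrangeanTerm d b l ν r : EReal) ≤ dualIntegrand d b l ν := by
  rcases hl.eq_or_lt with rfl | hl
  · rw [dualIntegrand, if_pos rfl]
    split_ifs with hb
    · rw [lagrangeanTerm_of_mult_eq_zero, EReal.coe_le_coe_iff]
      linarith [mul_nonpos_of_nonneg_of_nonpos hr (sub_nonpos.2 hb)]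
    · exact le_top
  · rw [dualIntegrand_of_mult_ne_zero hl.ne', EReal.coe_le_coe_iff]
    exact lagrangeanTerm_le hd hl hr

noncomputable def termArgmax (d b l ν : ℝ) : ℝ :=
  if l = 0 then 0 else termMaximizer d b l ν

lemma termArgmax_nonneg {d : ℝ} (hd : 0 < 1 + d) (b l ν : ℝ) : 0 ≤ termArgmax d b l ν := by
  unfold termArgmax termMaximizer
  split_ifs <;> positivity

lemma lagrangeanTerm_termArgmax {d b l ν : ℝ} (hd : 0 < 1 + d) (hb : l = 0 → b ≤ ν) :
    (lagrangeanTerm d b l ν (termArgmax d b l ν) : EReal) = dualIntegrand d b l ν := by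
  by_cases hl : l = 0
  · rw [termArgmax, if_pos hl, lagrangeanTerm_zero_right, dualIntegrand, if_pos hl,
      if_pos (hb hl)]
  · rw [termArgmax, if_neg hl, lagrangeanTerm_termMaximizer hd hl,
      dualIntegrand_of_mult_ne_zero hl]

noncomputable def lagrangean {m : ℕ} (q : Fin m → ℝ) (d : ℝ) (c l : Fin m → ℝ) (ν : ℝ)
    (r : Fin m → ℝ) : ℝ :=
  ∑ i, q i * lagrangeanTerm d (c i) (l i) ν (r i)

section Lagrangean

variable {m : ℕ} {q : Fin m → ℝ} {d : ℝ} {c l : Fin m → ℝ} {ν : ℝ}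

lemma lagrangean_le_dual (hq : ∀ i, 0 ≤ q i) (hd : 0 < 1 + d) (hl : ∀ i, 0 ≤ l i)
    {r : Fin m → ℝ} (hr : ∀ i, 0 ≤ r i) :
    (lagrangean q d c l ν r : EReal) ≤ ∑ i, (q i : EReal) * dualIntegrand d (c i) (l i) ν := by
  rw [lagrangean, EReal.coe_finsetSum]
  gcongr with i
  rw [EReal.coe_mul]
  exact mul_le_mul_of_nonneg_left (lagrangeanTerm_le_dualIntegrand hd (hl i) (hr i))
    (EReal.coe_nonneg.2 (hq i))

lemma lagrangean_termArgmax (hd : 0 < 1 + d) (hb : ∀ i, l i = 0 → c i ≤ ν) :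
    (lagrangean q d c l ν (fun i ↦ termArgmax d (c i) (l i) ν) : EReal)
      = ∑ i, (q i : EReal) * dualIntegrand d (c i) (l i) ν := by
  simp only [lagrangean, EReal.coe_finsetSum, EReal.coe_mul,
    lagrangeanTerm_termArgmax hd (hb _)]

lemma lagrangean_single {i₀ : Fin m} (hl : l i₀ = 0) (t : ℝ) :
    lagrangean q d c l ν (Pi.single i₀ t) = (∑ i, q i) * ν + t * (q i₀ * (c i₀ - ν)) := by
  have hterm : ∀ i, q i * lagrangeanTerm d (c i) (l i) ν ((Pi.single i₀ t : Fin m → ℝ) i)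
      = q i * ν + if i = i₀ then t * (q i₀ * (c i₀ - ν)) else 0 := by
    intro i
    rcases eq_or_ne i i₀ with rfl | hi
    · rw [Pi.single_eq_same, hl, lagrangeanTerm_of_mult_eq_zero, if_pos rfl]
      ring
    · rw [Pi.single_eq_of_ne hi, lagrangeanTerm_zero_right, if_neg hi, add_zero]
  simp only [lagrangean, hterm, sum_add_distrib, sum_ite_eq', mem_univ, if_true, sum_mul]

end Lagrangean

lemma EReal.iSup_coe_affine_eq_top {a B : ℝ} (hB : 0 < B) :
    ⨆ t : {t : ℝ // 0 ≤ t}, ((a + t.1 * B : ℝ) : EReal) = ⊤ := by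
  refine EReal.eq_top_iff_forall_lt _ |>.2 fun y ↦ ?_
  have ht : 0 ≤ (|y - a| + 1) / B := by positivity
  refine lt_of_lt_of_le ?_ (le_iSup _ ⟨_, ht⟩)
  rw [EReal.coe_lt_coe_iff, div_mul_cancel₀ _ hB.ne']
  linarith [le_abs_self (y - a)]

theorem sup_lagrangean_eq_dual_sum_general
    (m : ℕ) (q : Fin m → ℝ) (hq0 : ∀ i, 0 < q i)
    (d : ℝ) (hd : 0 < d) (c : Fin m → ℝ)
    (l : Fin m → ℝ) (hl : ∀ i, 0 ≤ l i) (ν : ℝ) :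
    (⨆ r : {r : Fin m → ℝ // ∀ i, 0 ≤ r i},
        ((∑ i, q i * (r.1 i * c i + l i * (r.1 i * Real.log ((1 + d) / r.1 i))
            + ν * (1 - r.1 i)) : ℝ) : EReal))
      = ∑ i, ((q i : EReal) * dualIntegrand d (c i) (l i) ν) := by
  change ⨆ r : {r : Fin m → ℝ // ∀ i, 0 ≤ r i}, (lagrangean q d c l ν r.1 : EReal) = _
  have hd1 : 0 < 1 + d := by linarith
  refine le_antisymm (iSup_le fun r ↦ lagrangean_le_dual (hq0 · |>.le) hd1 hl r.2) ?_
  by_cases hb : ∀ i, l i = 0 → c i ≤ ν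
  · exact le_iSup_of_le ⟨fun i ↦ termArgmax d (c i) (l i) ν,
      fun i ↦ termArgmax_nonneg hd1 _ _ _⟩ (lagrangean_termArgmax hd1 hb).ge
  · push Not at hb
    obtain ⟨i₀, hl₀, hc₀⟩ := hb
    refine le_top.trans ?_
    rw [← EReal.iSup_coe_affine_eq_top (a := (∑ i, q i) * ν) (mul_pos (hq0 i₀) (sub_pos.2 hc₀))]
    exact iSup_le fun t ↦ le_iSup_of_le
      ⟨Pi.single i₀ t.1, (Pi.single_nonneg (α := fun _ ↦ ℝ)).2 t.2⟩
      (by rw [lagrangean_single hl₀])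

/-- For every `λ ∈ (ℝ≥0)^m` and `ν ∈ ℝ`, the supremum (in the extended
reals) over `r ∈ (ℝ≥0)^m` of
`∑ i, q i * (r i * c i + λ i * (r i * ln ((1+d)/r i)) + ν * (1 - r i))`
(with the convention that the middle term is `0` at `r i = 0`, which holds
automatically since `Real.log 0 = 0`) equals `∑ i, q i * d̃(i, λ i, ν)`. -/
theorem sup_lagrangean_eq_dual_sum
    (m : ℕ) (q : Fin m → ℝ) (hq0 : ∀ i, 0 < q i) (hq1 : ∑ i, q i = 1)
    (d : ℝ) (hd : 0 < d) (c : Fin m → ℝ)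
    (l : Fin m → ℝ) (hl : ∀ i, 0 ≤ l i) (ν : ℝ) :
    (⨆ r : {r : Fin m → ℝ // ∀ i, 0 ≤ r i},
        ((∑ i, q i * (r.1 i * c i + l i * (r.1 i * Real.log ((1 + d) / r.1 i))
            + ν * (1 - r.1 i)) : ℝ) : EReal))
      = ∑ i, ((q i : EReal) * dualIntegrand d (c i) (l i) ν) :=
  sup_lagrangean_eq_dual_sum_general m q hq0 d hd c l hl ν
end

section
/- Let S = {1,…,m} be a finite set, q a pmf on S with q(i) > 0 for all i, d > 0, X ⊆ ℝⁿ a convex set, and f : X × S → ℝ a cost function such that x ↦ f(x,i) is convex on X for each i ∈ S. Define d̃(x, i, λ_i, ν) ∈ ℝ ∪ {+∞} by: d̃ = ν if λ_i = 0 and f(x,i) ≤ ν; d̃ = (1+d)·λ_i·exp((f(x,i) − λ_i − ν)/λ_i) + ν if λ_i > 0; and d̃ = +∞ if λ_i = 0 and f(x,i) > ν. Then the extended-real-valued function (x, λ, ν) ↦ Σ_{i∈S} q(i)·d̃(x, i, λ_i, ν) is convex on X × (ℝ≥0)^m × ℝ. -/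
/-!
With `u = b - λ - ν`, the Fenchel–Young inequality `s y + s (1 - log s) ≤ exp y` (equality at
`s = exp y`) exhibits `d̃(b, λ, ν) = (1 + d) λ exp (u / λ) + ν` as the supremum over slopes `s ≥ 0`
of `(1 + d) (s u + s (1 - log s) λ) + ν`; at `λ = 0` this supremum is `ν` or `⊤` according to the
sign of `u`, which is exactly the second branch of `d̃`. These minorants are affine in `(b, λ, ν)`
and nondecreasing in `b`, so their supremum is jointly convex and nondecreasing in `b`; composing
with the convex `x ↦ f(x, i)` and summing with weights `q i ≥ 0` gives the claim.
-/

open Real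

namespace EReal

theorem coe_mul_sum_of_nonneg {ι : Type*} {c : ℝ} (hc : 0 ≤ c) (s : Finset ι) (g : ι → EReal) :
    (c : EReal) * ∑ i ∈ s, g i = ∑ i ∈ s, (c : EReal) * g i :=
  map_sum (AddMonoidHom.mk ⟨((c : EReal) * ·), mul_zero _⟩
    (left_distrib_of_nonneg_of_ne_top (EReal.coe_nonneg.2 hc) (coe_ne_top c))) g s

theorem sum_coe_mul_le_of_le {ι : Type*} (s : Finset ι) {w : ι → ℝ} (hw : ∀ i ∈ s, 0 ≤ w i)
    {t t' : ℝ} (ht : 0 ≤ t) (ht' : 0 ≤ t') {g a b : ι → EReal}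
    (h : ∀ i ∈ s, g i ≤ t * a i + t' * b i) :
    ∑ i ∈ s, (w i : EReal) * g i
      ≤ t * ∑ i ∈ s, (w i : EReal) * a i + t' * ∑ i ∈ s, (w i : EReal) * b i := by
  rw [coe_mul_sum_of_nonneg ht, coe_mul_sum_of_nonneg ht', ← Finset.sum_add_distrib]
  refine Finset.sum_le_sum fun i hi => ?_
  have hwi : (0 : EReal) ≤ w i := EReal.coe_nonneg.2 (hw i hi)
  calc (w i : EReal) * g i ≤ w i * (t * a i + t' * b i) := mul_le_mul_of_nonneg_left (h i hi) hwi
    _ = t * (w i * a i) + t' * (w i * b i) := by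
      rw [left_distrib_of_nonneg_of_ne_top hwi (coe_ne_top _), mul_left_comm,
        mul_left_comm (w i : EReal)]

end EReal

theorem mul_add_mul_one_sub_log_le_exp {s : ℝ} (hs : 0 ≤ s) (y : ℝ) :
    s * y + s * (1 - log s) ≤ exp y := by
  rcases hs.eq_or_lt with rfl | hs
  · simpa using (exp_pos y).le
  have := mul_le_mul_of_nonneg_left (add_one_le_exp (y - log s)) hs.le
  rw [exp_sub, exp_log hs, mul_div_cancel₀ _ hs.ne'] at this
  linarith

noncomputable def dualIntegrandMinorant (d s b l ν : ℝ) : ℝ :=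
  (1 + d) * (s * (b - l - ν) + s * (1 - log s) * l) + ν

theorem dualIntegrandMinorant_convexComb (d s b b' l l' ν ν' t : ℝ) :
    dualIntegrandMinorant d s (t * b + (1 - t) * b') (t * l + (1 - t) * l') (t * ν + (1 - t) * ν')
      = t * dualIntegrandMinorant d s b l ν + (1 - t) * dualIntegrandMinorant d s b' l' ν' := by
  unfold dualIntegrandMinorant; ring

theorem dualIntegrandMinorant_mono {d s : ℝ} (hd : -1 < d) (hs : 0 ≤ s) {b b' : ℝ} (hb : b ≤ b')
    (l ν : ℝ) : dualIntegrandMinorant d s b l ν ≤ dualIntegrandMinorant d s b' l ν := by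
  unfold dualIntegrandMinorant
  gcongr
  linarith

theorem dualIntegrand_eq_iSup {d : ℝ} (hd : -1 < d) (b : ℝ) {l : ℝ} (hl : 0 ≤ l) (ν : ℝ) :
    dualIntegrand d b l ν = ⨆ s ≥ (0 : ℝ), (dualIntegrandMinorant d s b l ν : EReal) := by
  have hd' : 0 < 1 + d := by linarith
  unfold dualIntegrand dualIntegrandMinorant
  rcases hl.eq_or_lt with rfl | hl
  · simp only [if_true, mul_zero, add_zero]
    split_ifs with hb
    · refine le_antisymm (le_iSup₂_of_le 0 le_rfl (by simp)) (iSup₂_le fun s hs => ?_)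
      refine EReal.coe_le_coe_iff.2 ?_
      nlinarith [mul_nonneg hd'.le hs]
    · refine ((EReal.eq_top_iff_forall_lt _).2 fun y => ?_).symm
      obtain ⟨s, hs⟩ := exists_gt ((y - ν) / ((1 + d) * (b - ν)))
      have hbν : 0 < (1 + d) * (b - ν) := mul_pos hd' (by linarith)
      refine lt_of_lt_of_le (EReal.coe_lt_coe_iff.2 ?_)
        (le_iSup₂_of_le (max s 0) (le_max_right _ _) le_rfl)
      rw [div_lt_iff₀ hbν] at hs
      nlinarith [le_max_left s 0]
  · rw [if_neg hl.ne']
    refine le_antisymm (le_iSup₂_of_le (exp ((b - l - ν) / l)) (exp_pos _).le ?_)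
      (iSup₂_le fun s hs => ?_)
    · refine EReal.coe_le_coe_iff.2 (le_of_eq ?_)
      rw [log_exp]; field_simp; ring
    · refine EReal.coe_le_coe_iff.2 ?_
      have young : s * (b - l - ν) + s * (1 - log s) * l ≤ l * exp ((b - l - ν) / l) := by
        have := mul_le_mul_of_nonneg_left
          (mul_add_mul_one_sub_log_le_exp hs ((b - l - ν) / l)) hl.le
        rwa [mul_add, mul_left_comm, mul_div_cancel₀ _ hl.ne', mul_comm l (s * _)] at this
      have := mul_le_mul_of_nonneg_left young hd'.le
      linarith

theorem dualIntegrandMinorant_le {d : ℝ} (hd : -1 < d) {s : ℝ} (hs : 0 ≤ s) (b : ℝ) {l : ℝ}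
    (hl : 0 ≤ l) (ν : ℝ) : (dualIntegrandMinorant d s b l ν : EReal) ≤ dualIntegrand d b l ν := by
  rw [dualIntegrand_eq_iSup hd b hl ν]
  exact le_iSup₂_of_le s hs le_rfl

theorem dualIntegrand_le_convexComb {d : ℝ} (hd : -1 < d) {b b' b'' l l' ν ν' t : ℝ}
    (hl : 0 ≤ l) (hl' : 0 ≤ l') (ht₀ : 0 ≤ t) (ht₁ : t ≤ 1) (hb : b'' ≤ t * b + (1 - t) * b') :
    dualIntegrand d b'' (t * l + (1 - t) * l') (t * ν + (1 - t) * ν')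
      ≤ (t : EReal) * dualIntegrand d b l ν + ((1 - t : ℝ) : EReal) * dualIntegrand d b' l' ν' := by
  rw [dualIntegrand_eq_iSup hd _ (by positivity)]
  refine iSup₂_le fun s hs => ?_
  calc (dualIntegrandMinorant d s b'' (t * l + (1 - t) * l') (t * ν + (1 - t) * ν') : EReal)
      ≤ (dualIntegrandMinorant d s (t * b + (1 - t) * b') (t * l + (1 - t) * l')
          (t * ν + (1 - t) * ν') : EReal) :=
        EReal.coe_le_coe_iff.2 (dualIntegrandMinorant_mono hd hs hb _ _)
    _ = (t : EReal) * dualIntegrandMinorant d s b l ν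
          + ((1 - t : ℝ) : EReal) * dualIntegrandMinorant d s b' l' ν' := by
        rw [dualIntegrandMinorant_convexComb]; push_cast; rfl
    _ ≤ _ := by
        gcongr
        exacts [dualIntegrandMinorant_le hd hs b hl ν, dualIntegrandMinorant_le hd hs b' hl' ν']

theorem dual_objective_convex_general
    (n m : ℕ) (q : Fin m → ℝ) (hq0 : ∀ i, 0 < q i)
    (d : ℝ) (hd : 0 < d)
    (X : Set (Fin n → ℝ))
    (f : (Fin n → ℝ) → Fin m → ℝ) (hf : ∀ i, ConvexOn ℝ X (fun x => f x i)) :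
    ∀ x ∈ X, ∀ x' ∈ X, ∀ l l' : Fin m → ℝ, (∀ i, 0 ≤ l i) → (∀ i, 0 ≤ l' i) →
      ∀ ν ν' t : ℝ, 0 ≤ t → t ≤ 1 →
        (∑ i, ((q i : EReal) *
            dualIntegrand d (f (t • x + (1 - t) • x') i)
              (t * l i + (1 - t) * l' i) (t * ν + (1 - t) * ν')))
          ≤ ((t : ℝ) : EReal) * (∑ i, ((q i : EReal) * dualIntegrand d (f x i) (l i) ν))
            + ((1 - t : ℝ) : EReal) *
                (∑ i, ((q i : EReal) * dualIntegrand d (f x' i) (l' i) ν')) := by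
  intro x hx x' hx' l l' hl hl' ν ν' t ht₀ ht₁
  refine EReal.sum_coe_mul_le_of_le _ (fun i _ => (hq0 i).le) ht₀ (sub_nonneg.2 ht₁) fun i _ => ?_
  refine dualIntegrand_le_convexComb (by linarith) (hl i) (hl' i) ht₀ ht₁ ?_
  simpa only [smul_eq_mul] using (hf i).2 hx hx' ht₀ (sub_nonneg.2 ht₁) (add_sub_cancel t 1)

/-- if `x ↦ f x i` is convex on a convex set `X` for each `i`, then the
extended-real-valued function `(x, λ, ν) ↦ ∑ i, q i * d̃(x, i, λ i, ν)` is convex on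
`X × (ℝ≥0)^m × ℝ`, i.e. the convexity inequality holds in the extended reals for
every convex combination of points of the domain. -/
theorem dual_objective_convex
    (n m : ℕ) (q : Fin m → ℝ) (hq0 : ∀ i, 0 < q i) (hq1 : ∑ i, q i = 1)
    (d : ℝ) (hd : 0 < d)
    (X : Set (Fin n → ℝ)) (hX : Convex ℝ X)
    (f : (Fin n → ℝ) → Fin m → ℝ) (hf : ∀ i, ConvexOn ℝ X (fun x => f x i)) :
    ∀ x ∈ X, ∀ x' ∈ X, ∀ l l' : Fin m → ℝ, (∀ i, 0 ≤ l i) → (∀ i, 0 ≤ l' i) →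
      ∀ ν ν' t : ℝ, 0 ≤ t → t ≤ 1 →
        (∑ i, ((q i : EReal) *
            dualIntegrand d (f (t • x + (1 - t) • x') i)
              (t * l i + (1 - t) * l' i) (t * ν + (1 - t) * ν')))
          ≤ ((t : ℝ) : EReal) * (∑ i, ((q i : EReal) * dualIntegrand d (f x i) (l i) ν))
            + ((1 - t : ℝ) : EReal) *
                (∑ i, ((q i : EReal) * dualIntegrand d (f x' i) (l' i) ν')) :=
  dual_objective_convex_general n m q hq0 d hd X f hf
end

section
/- Let S = {1,…,m} be a finite set, q a pmf on S with q(i) > 0 for all i, d > 0, X ⊆ ℝⁿ, and f : X × S → ℝ. Let A = { pmf p : p(i)/q(i) ≤ 1+d for all i } and define d̃(x, i, λ_i, ν) as: ν if λ_i = 0 and f(x,i) ≤ ν; (1+d)·λ_i·exp((f(x,i) − λ_i − ν)/λ_i) + ν if λ_i > 0; +∞ if λ_i = 0 and f(x,i) > ν. Then a point x* ∈ X minimizes x ↦ max_{p ∈ A} Σ_{i∈S} p(i)·f(x,i) over X if and only if x* minimizes x ↦ inf_{λ ∈ (ℝ≥0)^m, ν ∈ ℝ} Σ_{i∈S} q(i)·d̃(x,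 i, λ_i, ν) over X. -/
open Finset

lemma EReal.coe_finset_sum {ι : Type*} (s : Finset ι) (g : ι → ℝ) :
    ((∑ i ∈ s, g i : ℝ) : EReal) = ∑ i ∈ s, (g i : EReal) :=
  map_sum (⟨⟨Real.toEReal, EReal.coe_zero⟩, EReal.coe_add⟩ : ℝ →+ EReal) g s

section CappedSimplex

variable {ι : Type*} [Fintype ι]

def cappedSimplex (w : ι → ℝ) : Set (ι → ℝ) :=
  {p | (∀ i, 0 ≤ p i) ∧ ∑ i, p i = 1 ∧ ∀ i, p i ≤ w i}

def rockafellarUryasev (w b : ι → ℝ) (ν : ℝ) : ℝ :=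
  ν + ∑ i, w i * max (b i - ν) 0

lemma sum_mul_eq_add_sum_mul_sub {p : ι → ℝ} (hp1 : ∑ i, p i = 1) (b : ι → ℝ) (ν : ℝ) :
    ∑ i, p i * b i = ν + ∑ i, p i * (b i - ν) := by
  simp only [mul_sub, sum_sub_distrib, ← sum_mul, hp1]
  ring

lemma sum_mul_le_rockafellarUryasev {w p : ι → ℝ} (hp : p ∈ cappedSimplex w) (b : ι → ℝ)
    (ν : ℝ) : ∑ i, p i * b i ≤ rockafellarUryasev w b ν := by
  obtain ⟨hp0, hp1, hpw⟩ := hp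
  calc ∑ i, p i * b i = ν + ∑ i, p i * (b i - ν) := sum_mul_eq_add_sum_mul_sub hp1 b ν
    _ ≤ ν + ∑ i, w i * max (b i - ν) 0 := by
        gcongr ν + ?_
        refine sum_le_sum fun i _ => ?_
        calc p i * (b i - ν) ≤ p i * max (b i - ν) 0 :=
              mul_le_mul_of_nonneg_left (le_max_left _ _) (hp0 i)
          _ ≤ w i * max (b i - ν) 0 := mul_le_mul_of_nonneg_right (hpw i) (le_max_right _ _)

lemma exists_threshold [Nonempty ι] (w b : ι → ℝ) {c : ℝ} (hc0 : 0 ≤ c)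
    (hc : c ≤ ∑ i, w i) :
    ∃ ν, ∑ i with ν < b i, w i ≤ c ∧ c ≤ ∑ i with ν ≤ b i, w i := by
  classical
  -- `ν` is the largest value `b j` whose upper set `{b j ≤ b}` still carries weight `≥ c`.
  obtain ⟨j₀, -, hj₀⟩ := univ.exists_min_image b univ_nonempty
  have hD : (univ.filter fun j => c ≤ ∑ i with b j ≤ b i, w i).Nonempty :=
    ⟨j₀, by simpa [filter_true_of_mem fun i _ => hj₀ i (mem_univ i)] using hc⟩
  obtain ⟨j, hjD, hjmax⟩ := exists_max_image _ b hD
  refine ⟨b j, ?_, (mem_filter.1 hjD).2⟩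
  by_contra! hlt
  have hU : (univ.filter fun i => b j < b i).Nonempty := by
    by_contra hU
    rw [not_nonempty_iff_eq_empty] at hU
    simp only [hU, sum_empty] at hlt
    linarith
  obtain ⟨j', hj'U, hj'min⟩ := exists_min_image _ b hU
  have hj' : b j < b j' := (mem_filter.1 hj'U).2
  have hupper : (univ.filter fun i => b j' ≤ b i) = univ.filter fun i => b j < b i := by
    ext i
    simp only [mem_filter, mem_univ, true_and]
    exact ⟨hj'.trans_le, fun hi => hj'min i (by simpa using hi)⟩
  have : j' ∈ univ.filter fun j => c ≤ ∑ i with b j ≤ b i, w i := by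
    simpa [hupper] using hlt.le
  exact (hjmax j' this).not_gt hj'

lemma exists_mem_cappedSimplex_sum_mul_eq {w : ι → ℝ} (hw : ∀ i, 0 ≤ w i)
    (h1 : 1 ≤ ∑ i, w i) (b : ι → ℝ) :
    ∃ p ∈ cappedSimplex w, ∃ ν, ∑ i, p i * b i = rockafellarUryasev w b ν := by
  classical
  have : Nonempty ι := univ_nonempty_iff.1 (nonempty_of_sum_ne_zero (f := w) (by linarith))
  obtain ⟨ν, hlo, hhi⟩ := exists_threshold w b zero_le_one h1
  set s := ∑ i with ν < b i, w i
  set t := ∑ i with ν ≤ b i, w i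
  -- `θ` interpolates between filling `{ν < b}` and `{ν ≤ b}`; if `t = s` then `s = 1` and `θ = 0`.
  set θ := (1 - s) / (t - s)
  have hθ0 : 0 ≤ θ := div_nonneg (by linarith) (by linarith)
  have hθ1 : θ ≤ 1 := div_le_one_of_le₀ (by linarith) (by linarith)
  have hθ : s + θ * (t - s) = 1 := by
    rcases eq_or_ne (t - s) 0 with h | h
    · rw [h, mul_zero]; linarith
    · simp only [θ]; field_simp; ring
  let p i := (1 - θ) * (if ν < b i then w i else 0) + θ * (if ν ≤ b i then w i else 0)
  have hp1 : ∑ i, p i = 1 := by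
    simp only [p, sum_add_distrib, ← mul_sum, ← sum_filter]
    linarith
  have hcut : ∀ i, p i * (b i - ν) = w i * max (b i - ν) 0 := by
    intro i
    rcases lt_trichotomy ν (b i) with h | h | h
    · simp only [p, if_pos h, if_pos h.le, max_eq_left (sub_nonneg.2 h.le)]; ring
    · simp [h]
    · simp [p, h.not_gt, h.not_ge, max_eq_right (sub_nonpos.2 h.le)]
  refine ⟨p, ⟨fun i => ?_, hp1, fun i => ?_⟩, ν, ?_⟩
  · have := hw i
    simp only [p]
    split_ifs <;> nlinarith
  · have := hw i
    simp only [p]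
    split_ifs <;> nlinarith
  · rw [sum_mul_eq_add_sum_mul_sub hp1 b ν, rockafellarUryasev]
    simp only [hcut]

theorem isLeast_range_rockafellarUryasev {w : ι → ℝ} (hw : ∀ i, 0 ≤ w i)
    (h1 : 1 ≤ ∑ i, w i) (b : ι → ℝ) :
    IsLeast (Set.range (rockafellarUryasev w b))
      (sSup ((fun p => ∑ i, p i * b i) '' cappedSimplex w)) := by
  obtain ⟨p, hp, ν, hpν⟩ := exists_mem_cappedSimplex_sum_mul_eq hw h1 b
  have hgreatest : IsGreatest ((fun p => ∑ i, p i * b i) '' cappedSimplex w) (∑ i, p i * b i) :=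
    ⟨⟨p, hp, rfl⟩, by
      rintro _ ⟨p', hp', rfl⟩
      exact hpν ▸ sum_mul_le_rockafellarUryasev hp' b ν⟩
  rw [hgreatest.csSup_eq, hpν]
  exact ⟨⟨ν, rfl⟩, by
    rintro _ ⟨ν', rfl⟩
    exact hpν ▸ sum_mul_le_rockafellarUryasev hp b ν'⟩

end CappedSimplex

section DualIntegrand

lemma coe_add_mul_max_le_dualIntegrand {d : ℝ} (hd : 0 ≤ 1 + d) (b : ℝ) {l : ℝ} (hl : 0 ≤ l)
    (ν : ℝ) : ((ν + (1 + d) * max (b - ν) 0 : ℝ) : EReal) ≤ dualIntegrand d b l ν := by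
  unfold dualIntegrand
  split_ifs with hl0 hb
  · simp [max_eq_right (sub_nonpos.2 hb)]
  · exact le_top
  · have hexp : b - ν ≤ l * Real.exp ((b - l - ν) / l) :=
      calc b - ν = l * ((b - l - ν) / l + 1) := by field_simp; ring
        _ ≤ l * Real.exp ((b - l - ν) / l) :=
          mul_le_mul_of_nonneg_left (Real.add_one_le_exp _) hl
    rw [EReal.coe_le_coe_iff, add_comm ν, mul_assoc]
    gcongr
    exact max_le hexp (by positivity)

lemma dualIntegrand_max_sub (d b ν : ℝ) :
    dualIntegrand d b (max (b - ν) 0) ν = ((ν + (1 + d) * max (b - ν) 0 : ℝ) : EReal) := by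
  rcases le_or_gt b ν with h | h
  · simp [dualIntegrand, h]
  · rw [dualIntegrand, max_eq_left (sub_nonneg.2 h.le), if_neg (sub_ne_zero.2 h.ne')]
    simp [add_comm]

variable {ι : Type*} [Fintype ι] {q : ι → ℝ}

lemma sum_coe_mul_eq_rockafellarUryasev (hq1 : ∑ i, q i = 1) (d : ℝ) (b : ι → ℝ) (ν : ℝ) :
    ∑ i, (q i : EReal) * ((ν + (1 + d) * max (b i - ν) 0 : ℝ) : EReal) =
      (rockafellarUryasev (fun i => (1 + d) * q i) b ν : EReal) := by
  simp_rw [← EReal.coe_mul, ← EReal.coe_finset_sum, EReal.coe_eq_coe_iff]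
  simp only [rockafellarUryasev, mul_add, sum_add_distrib, ← sum_mul, hq1, one_mul]
  exact congrArg (ν + ·) (sum_congr rfl fun i _ => by ring)

lemma rockafellarUryasev_le_sum_dualIntegrand (hq0 : ∀ i, 0 ≤ q i) (hq1 : ∑ i, q i = 1)
    {d : ℝ} (hd : 0 ≤ 1 + d) (b : ι → ℝ) {l : ι → ℝ} (hl : ∀ i, 0 ≤ l i) (ν : ℝ) :
    (rockafellarUryasev (fun i => (1 + d) * q i) b ν : EReal) ≤
      ∑ i, (q i : EReal) * dualIntegrand d (b i) (l i) ν := by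
  rw [← sum_coe_mul_eq_rockafellarUryasev hq1]
  exact sum_le_sum fun i _ => mul_le_mul_of_nonneg_left
    (coe_add_mul_max_le_dualIntegrand hd (b i) (hl i) ν) (EReal.coe_nonneg.2 (hq0 i))

theorem iInf_sum_dualIntegrand_eq_sSup (hq0 : ∀ i, 0 < q i) (hq1 : ∑ i, q i = 1) {d : ℝ}
    (hd : 0 ≤ d) (b : ι → ℝ) :
    ⨅ (l : ι → ℝ) (_ : ∀ i, 0 ≤ l i) (ν : ℝ), ∑ i, (q i : EReal) * dualIntegrand d (b i) (l i) ν =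
      ((sSup ((fun p => ∑ i, p i * b i) ''
        {p : ι → ℝ | (∀ i, 0 ≤ p i) ∧ ∑ i, p i = 1 ∧ ∀ i, p i / q i ≤ 1 + d}) : ℝ) : EReal) := by
  have hA : {p : ι → ℝ | (∀ i, 0 ≤ p i) ∧ ∑ i, p i = 1 ∧ ∀ i, p i / q i ≤ 1 + d} =
      cappedSimplex fun i => (1 + d) * q i := by
    ext p
    simp only [cappedSimplex, Set.mem_ofPred_eq, div_le_iff₀ (hq0 _)]
  obtain ⟨⟨ν, hν⟩, hmin⟩ := isLeast_range_rockafellarUryasev (w := fun i => (1 + d) * q i)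
    (fun i => mul_nonneg (by linarith) (hq0 i).le) (by simp only [← mul_sum, hq1]; linarith) b
  rw [hA]
  refine le_antisymm ?_ (le_iInf₂ fun l hl => le_iInf fun ν' => ?_)
  · refine ((iInf₂_le (fun i => max (b i - ν) 0) fun i => le_max_right _ _).trans
      (iInf_le _ ν)).trans_eq ?_
    simp_rw [dualIntegrand_max_sub]
    rw [sum_coe_mul_eq_rockafellarUryasev hq1 d b ν, hν]
  · exact (EReal.coe_le_coe_iff.2 (hmin ⟨ν', rfl⟩)).trans
      (rockafellarUryasev_le_sum_dualIntegrand (fun i => (hq0 i).le) hq1 (by linarith) b hl ν')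

end DualIntegrand

theorem primal_dual_minimizers_coincide_general
    (n m : ℕ) (q : Fin m → ℝ) (hq0 : ∀ i, 0 < q i) (hq1 : ∑ i, q i = 1)
    (d : ℝ) (hd : 0 < d)
    (X : Set (Fin n → ℝ)) (f : (Fin n → ℝ) → Fin m → ℝ)
    (xstar : Fin n → ℝ) :
    let A : Set (Fin m → ℝ) :=
      {p | (∀ i, 0 ≤ p i) ∧ ∑ i, p i = 1 ∧ ∀ i, p i / q i ≤ 1 + d}
    let J₁ : (Fin n → ℝ) → ℝ := fun x => sSup ((fun p => ∑ i, p i * f x i) '' A)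
    let J₂ : (Fin n → ℝ) → EReal := fun x =>
      ⨅ (l : Fin m → ℝ) (_ : ∀ i, 0 ≤ l i) (ν : ℝ),
        ∑ i, ((q i : EReal) * dualIntegrand d (f x i) (l i) ν)
    (∀ x ∈ X, J₁ xstar ≤ J₁ x) ↔ (∀ x ∈ X, J₂ xstar ≤ J₂ x) := by
  intro A J₁ J₂
  have hJ : ∀ x, J₂ x = (J₁ x : EReal) := fun x =>
    iInf_sum_dualIntegrand_eq_sSup hq0 hq1 hd.le (f x)
  simp only [hJ, EReal.coe_le_coe_iff]

/-- a point `x* ∈ X` minimizes the worst-case (primal) objective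
`x ↦ max_{p ∈ A} ∑ i, p i * f x i` over `X` if and only if it minimizes the dual
objective `x ↦ inf_{λ ∈ (ℝ≥0)^m, ν ∈ ℝ} ∑ i, q i * d̃(x, i, λ i, ν)` over `X`. -/
theorem primal_dual_minimizers_coincide
    (n m : ℕ) (q : Fin m → ℝ) (hq0 : ∀ i, 0 < q i) (hq1 : ∑ i, q i = 1)
    (d : ℝ) (hd : 0 < d)
    (X : Set (Fin n → ℝ)) (f : (Fin n → ℝ) → Fin m → ℝ)
    (xstar : Fin n → ℝ) (hxstar : xstar ∈ X) :
    let A : Set (Fin m → ℝ) :=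
      {p | (∀ i, 0 ≤ p i) ∧ ∑ i, p i = 1 ∧ ∀ i, p i / q i ≤ 1 + d}
    let J₁ : (Fin n → ℝ) → ℝ := fun x => sSup ((fun p => ∑ i, p i * f x i) '' A)
    let J₂ : (Fin n → ℝ) → EReal := fun x =>
      ⨅ (l : Fin m → ℝ) (_ : ∀ i, 0 ≤ l i) (ν : ℝ),
        ∑ i, ((q i : EReal) * dualIntegrand d (f x i) (l i) ν)
    (∀ x ∈ X, J₁ xstar ≤ J₁ x) ↔ (∀ x ∈ X, J₂ xstar ≤ J₂ x) :=
  primal_dual_minimizers_coincide_general n m q hq0 hq1 d hd X f xstar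
end

section
/- Let S = {1,…,m} be a finite set, q a pmf on S with q(i) > 0 for all i, d > 0, X ⊆ ℝⁿ an open convex set, and k ≥ 1. If x ↦ f(x,i) is convex and of class C^k on X for each i ∈ S, then the function (x, λ, ν) ↦ Σ_{i∈S} q(i)·[ (1+d)·λ_i·exp((f(x,i) − λ_i − ν)/λ_i) + ν ] is convex and of class C^k on X × (0,∞)^m × ℝ. -/
/-! The map `(t, u) ↦ t * exp (u / t)` is the perspective of `exp`, hence jointly convex on
`t > 0`, and it is increasing in `u`. Feeding it the convex function `f x i - λᵢ - ν` and the
linear function `λᵢ` therefore gives a convex function of `(x, λ, ν)`; positive multiples, the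
linear term `ν` and the sum over `i` preserve convexity. Smoothness holds because `λᵢ > 0`
on the domain, so the quotient inside `exp` is `C^k`. -/

open Set

theorem ConvexOn.perspective_s11 {g : ℝ → ℝ} (hg : ConvexOn ℝ univ g) :
    ConvexOn ℝ (Ioi 0 ×ˢ univ) fun p : ℝ × ℝ => p.1 * g (p.2 / p.1) := by
  refine ⟨(convex_Ioi 0).prod convex_univ, ?_⟩
  rintro ⟨t, u⟩ ⟨ht, -⟩ ⟨s, v⟩ ⟨hs, -⟩ a b ha hb hab
  simp only [mem_Ioi] at ht hs
  simp only [Prod.smul_mk, Prod.mk_add_mk, smul_eq_mul]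
  have hL : 0 < a * t + b * s := by
    rcases ha.eq_or_lt with rfl | ha'
    · simp only [zero_add] at hab; subst hab; simpa using hs
    · positivity
  have hweights : a * t / (a * t + b * s) + b * s / (a * t + b * s) = 1 := by
    field_simp
  -- Jensen for `g` with weights `a t / L` and `b s / L`, where `L = a t + b s`
  have hjensen := hg.2 (mem_univ (u / t)) (mem_univ (v / s))
    (by positivity : 0 ≤ a * t / (a * t + b * s)) (by positivity) hweights
  simp only [smul_eq_mul] at hjensen
  calc (a * t + b * s) * g ((a * u + b * v) / (a * t + b * s))
      = (a * t + b * s) * g (a * t / (a * t + b * s) * (u / t) +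
          b * s / (a * t + b * s) * (v / s)) := by
        congr 2; field_simp
    _ ≤ (a * t + b * s) * (a * t / (a * t + b * s) * g (u / t) +
          b * s / (a * t + b * s) * g (v / s)) := by gcongr
    _ = a * (t * g (u / t)) + b * (s * g (v / s)) := by field_simp

theorem ConvexOn.perspective_comp {E : Type*} [AddCommGroup E] [Module ℝ E] {s : Set E}
    {φ : E → ℝ} {g : ℝ → ℝ} (hg : ConvexOn ℝ univ g) (hg_mono : Monotone g)
    (hφ : ConvexOn ℝ s φ) (τ : E →ₗ[ℝ] ℝ) (hτ : ∀ x ∈ s, 0 < τ x) :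
    ConvexOn ℝ s fun x => τ x * g (φ x / τ x) := by
  refine ⟨hφ.1, fun x hx y hy a b ha hb hab => ?_⟩
  have hpos : 0 < τ (a • x + b • y) := hτ _ (hφ.1 hx hy ha hb hab)
  have hφ_le : φ (a • x + b • y) ≤ a * φ x + b * φ y := by
    simpa using hφ.2 hx hy ha hb hab
  have hpersp := hg.perspective_s11.2 (x := (τ x, φ x)) (y := (τ y, φ y))
    ⟨hτ x hx, mem_univ _⟩ ⟨hτ y hy, mem_univ _⟩ ha hb hab
  simp only [Prod.smul_mk, Prod.mk_add_mk, smul_eq_mul] at hpersp ⊢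
  calc τ (a • x + b • y) * g (φ (a • x + b • y) / τ (a • x + b • y))
      ≤ τ (a • x + b • y) * g ((a * φ x + b * φ y) / τ (a • x + b • y)) := by
        gcongr
        exact hg_mono (div_le_div_of_nonneg_right hφ_le hpos.le)
    _ ≤ _ := by simpa using hpersp

theorem convexOn_sum {ι E : Type*} [AddCommGroup E] [Module ℝ E] {s : Set E}
    (hs : Convex ℝ s) {t : Finset ι} {f : ι → E → ℝ} (hf : ∀ i ∈ t, ConvexOn ℝ s (f i)) :
    ConvexOn ℝ s fun x => ∑ i ∈ t, f i x := by
  refine ⟨hs, fun x hx y hy a b ha hb hab => ?_⟩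
  simp only [smul_eq_mul, Finset.mul_sum, ← Finset.sum_add_distrib]
  exact Finset.sum_le_sum fun i hi => (hf i hi).2 hx hy ha hb hab

theorem dual_objective_convex_and_smooth_general
    (n m : ℕ) (q : Fin m → ℝ) (hq0 : ∀ i, 0 < q i)
    (d : ℝ) (hd : 0 < d)
    (X : Set (Fin n → ℝ)) (hXconv : Convex ℝ X)
    (k : ℕ)
    (f : (Fin n → ℝ) → Fin m → ℝ)
    (hconv : ∀ i, ConvexOn ℝ X (fun x => f x i))
    (hsmooth : ∀ i, ContDiffOn ℝ k (fun x => f x i) X) :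
    let D : Set ((Fin n → ℝ) × (Fin m → ℝ) × ℝ) :=
      {p | p.1 ∈ X ∧ ∀ i, 0 < p.2.1 i}
    let G : ((Fin n → ℝ) × (Fin m → ℝ) × ℝ) → ℝ := fun p =>
      ∑ i, q i * ((1 + d) * p.2.1 i *
          Real.exp ((f p.1 i - p.2.1 i - p.2.2) / p.2.1 i) + p.2.2)
    ConvexOn ℝ D G ∧ ContDiffOn ℝ k G D := by
  intro D G
  have hD : Convex ℝ D := by
    convert hXconv.prod ((convex_pi (s := univ) fun i _ => convex_Ioi (0 : ℝ)).prod
      (convex_univ (E := ℝ) (𝕜 := ℝ))) using 1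
    ext; simp [D]
  let lam (i : Fin m) : (Fin n → ℝ) × (Fin m → ℝ) × ℝ →ₗ[ℝ] ℝ :=
    (LinearMap.proj i).comp ((LinearMap.fst ..).comp (LinearMap.snd ..))
  let nu : (Fin n → ℝ) × (Fin m → ℝ) × ℝ →ₗ[ℝ] ℝ := (LinearMap.snd ..).comp (LinearMap.snd ..)
  constructor
  · refine convexOn_sum hD fun i _ => ?_
    have hf : ConvexOn ℝ D fun p => f p.1 i :=
      ((hconv i).comp_linearMap (LinearMap.fst ..)).subset (fun p hp => hp.1) hD
    have hexp : ConvexOn ℝ D fun p => lam i p * Real.exp ((f p.1 i - lam i p - nu p) / lam i p) :=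
      ConvexOn.perspective_comp convexOn_exp Real.exp_monotone
        ((hf.sub ((lam i).concaveOn hD)).sub (nu.concaveOn hD)) (lam i) fun p hp => hp.2 i
    have hterm := ((hexp.smul (by positivity : (0 : ℝ) ≤ 1 + d)).add (nu.convexOn hD)).smul
      (hq0 i).le
    exact hterm.congr fun p _ => by dsimp [lam, nu]; ring
  · refine ContDiffOn.sum fun i _ => ?_
    have hfx : ContDiffOn ℝ k (fun p : (Fin n → ℝ) × (Fin m → ℝ) × ℝ => f p.1 i) D :=
      (hsmooth i).comp contDiff_fst.contDiffOn fun p hp => hp.1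
    have hlam : ContDiffOn ℝ k (fun p : (Fin n → ℝ) × (Fin m → ℝ) × ℝ => p.2.1 i) D := by
      fun_prop
    have hnu : ContDiffOn ℝ k (fun p : (Fin n → ℝ) × (Fin m → ℝ) × ℝ => p.2.2) D := by fun_prop
    have hquot := ((hfx.sub hlam).sub hnu).div hlam fun p hp => (hp.2 i).ne'
    exact contDiffOn_const.mul (((contDiffOn_const.mul hlam).mul hquot.exp).add hnu)

/-- if `X ⊆ ℝⁿ` is open and convex and `x ↦ f x i` is convex and of
class `C^k` (`k ≥ 1`) on `X` for each `i`, then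
`(x, λ, ν) ↦ ∑ i, q i * ((1+d) * λ i * exp ((f x i - λ i - ν)/λ i) + ν)`
is convex and of class `C^k` on `X × (0,∞)^m × ℝ`. -/
theorem dual_objective_convex_and_smooth
    (n m : ℕ) (q : Fin m → ℝ) (hq0 : ∀ i, 0 < q i) (hq1 : ∑ i, q i = 1)
    (d : ℝ) (hd : 0 < d)
    (X : Set (Fin n → ℝ)) (hXo : IsOpen X) (hXconv : Convex ℝ X)
    (k : ℕ) (hk : 1 ≤ k)
    (f : (Fin n → ℝ) → Fin m → ℝ)
    (hconv : ∀ i, ConvexOn ℝ X (fun x => f x i))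
    (hsmooth : ∀ i, ContDiffOn ℝ k (fun x => f x i) X) :
    let D : Set ((Fin n → ℝ) × (Fin m → ℝ) × ℝ) :=
      {p | p.1 ∈ X ∧ ∀ i, 0 < p.2.1 i}
    let G : ((Fin n → ℝ) × (Fin m → ℝ) × ℝ) → ℝ := fun p =>
      ∑ i, q i * ((1 + d) * p.2.1 i *
          Real.exp ((f p.1 i - p.2.1 i - p.2.2) / p.2.1 i) + p.2.2)
    ConvexOn ℝ D G ∧ ContDiffOn ℝ k G D :=
  dual_objective_convex_and_smooth_general n m q hq0 d hd X hXconv k f hconv hsmooth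
end

section
/- Let S = {1,…,m} be a finite set, let q be the uniform pmf q(i) = 1/m, let d > 0 be such that C := m/(1+d) is a positive integer, and let c : S → ℝ. Let A = { pmf p : p(i)/q(i) ≤ 1+d for all i }. Then max_{p ∈ A} Σ_{i∈S} p(i)·c(i) = max over subsets T ⊆ S with |T| = C of (1/C)·Σ_{i∈T} c(i), i.e., the worst-case expectation equals the average of the C largest values of c. -/
/-- for the uniform nominal pmf `q i = 1/m` and `d > 0` such that
`C = m/(1+d)` is a positive integer, the worst-case expectation
`max_{p ∈ A} ∑ i, p i * c i` over the ambiguity set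
`A = { pmf p : p i / q i ≤ 1 + d }` equals the maximum over `C`-element subsets
`T ⊆ S` of `(∑ i ∈ T, c i) / C`, i.e. the average of the `C` largest values of `c`. -/
theorem worst_case_expectation_eq_avg_of_worst_C
    (m : ℕ) (hm : 1 ≤ m) (d : ℝ) (hd : 0 < d)
    (C : ℕ) (hC1 : 1 ≤ C) (hCd : (C : ℝ) = (m : ℝ) / (1 + d))
    (c : Fin m → ℝ) :
    let q : Fin m → ℝ := fun _ => 1 / (m : ℝ)
    let A : Set (Fin m → ℝ) :=
      {p | (∀ i, 0 ≤ p i) ∧ ∑ i, p i = 1 ∧ ∀ i, p i / q i ≤ 1 + d}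
    ∃ v : ℝ, IsGreatest ((fun p => ∑ i, p i * c i) '' A) v ∧
      IsGreatest {w : ℝ | ∃ T : Finset (Fin m), T.card = C ∧
        w = (∑ i ∈ T, c i) / (C : ℝ)} v := by
  intro q A
  have hm0 : (0:ℝ) < m := by exact_mod_cast hm
  have hd1 : (0:ℝ) < 1 + d := by linarith
  have hC0 : (0:ℝ) < C := by exact_mod_cast hC1
  have hmC : (m:ℝ) = C * (1 + d) := by
    field_simp at hCd; linarith
  have hCm : C ≤ m := by
    have : (C:ℝ) ≤ m := by nlinarith
    exact_mod_cast this
  -- choose a maximizing C-subset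
  obtain ⟨Tex, hTex⟩ := Finset.exists_subset_card_eq
    (show C ≤ (Finset.univ : Finset (Fin m)).card by simpa using hCm)
  obtain ⟨T₀, hT₀mem, hT₀max⟩ := Finset.exists_max_image
    ((Finset.univ : Finset (Fin m)).powersetCard C) (fun T => ∑ i ∈ T, c i)
    ⟨Tex, Finset.mem_powersetCard.mpr ⟨Finset.subset_univ _, hTex.2⟩⟩
  have hT₀card : T₀.card = C := (Finset.mem_powersetCard.mp hT₀mem).2
  have hne : T₀.Nonempty := Finset.card_pos.mp (by omega)
  -- swapping property
  have hswap : ∀ j ∉ T₀, ∀ i ∈ T₀, c j ≤ c i := by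
    intro j hj i hi
    have hjne : j ∉ T₀.erase i := fun h => hj (Finset.mem_of_mem_erase h)
    have hmemT' : insert j (T₀.erase i) ∈ (Finset.univ : Finset (Fin m)).powersetCard C := by
      rw [Finset.mem_powersetCard]
      refine ⟨Finset.subset_univ _, ?_⟩
      rw [Finset.card_insert_of_notMem hjne, Finset.card_erase_of_mem hi, hT₀card]
      omega
    have hle := hT₀max _ hmemT'
    rw [Finset.sum_insert hjne, Finset.sum_erase_eq_sub hi] at hle
    linarith
  set t := T₀.inf' hne c with ht
  have htle : ∀ i ∈ T₀, t ≤ c i := fun i hi => Finset.inf'_le _ hi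
  obtain ⟨i₀, hi₀, hti₀⟩ := Finset.exists_mem_eq_inf' hne c
  have hout : ∀ j ∉ T₀, c j ≤ t := fun j hj => by
    show c j ≤ T₀.inf' hne c
    rw [hti₀]; exact hswap j hj i₀ hi₀
  refine ⟨(∑ i ∈ T₀, c i) / C, ⟨?_, ?_⟩, ⟨T₀, hT₀card, rfl⟩, ?_⟩
  · -- membership: witness pmf
    refine ⟨fun i => if i ∈ T₀ then 1/(C:ℝ) else 0, ⟨?_, ?_, ?_⟩, ?_⟩
    · intro i; dsimp only; split <;> positivity
    · rw [Finset.sum_ite_mem, Finset.univ_inter, Finset.sum_const, hT₀card, nsmul_eq_mul]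
      field_simp
    · intro i
      have hq : q i = 1 / (m:ℝ) := rfl
      dsimp only
      rw [hq, div_div_eq_mul_div, div_one]
      split
      · rw [hmC]; rw [one_div, inv_mul_eq_div, mul_comm, mul_div_assoc]
        rw [div_self (by positivity), mul_one]
      · simp; positivity
    · simp only [ite_mul, zero_mul]
      rw [Finset.sum_ite_mem, Finset.univ_inter, ← Finset.mul_sum, one_div,
        inv_mul_eq_div]
  · -- upper bound over A
    rintro w ⟨p, ⟨hp0, hp1, hpd⟩, rfl⟩
    have hpc : ∀ i, p i ≤ 1 / C := by
      intro i
      have h := hpd i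
      have hq : q i = 1 / (m:ℝ) := rfl
      rw [hq, div_div_eq_mul_div, div_one] at h
      rw [le_div_iff₀ hC0]
      nlinarith
    have e1 : ∑ i, p i * (c i - t) = (∑ i, p i * c i) - t := by
      simp only [mul_sub]
      rw [Finset.sum_sub_distrib, ← Finset.sum_mul, hp1, one_mul]
    have e2 : ∑ i, p i * (c i - t) ≤ ∑ i ∈ T₀, (1/(C:ℝ)) * (c i - t) := by
      rw [← Finset.sum_add_sum_compl T₀ (fun i => p i * (c i - t))]
      have h1 : ∑ i ∈ T₀, p i * (c i - t) ≤ ∑ i ∈ T₀, (1/(C:ℝ)) * (c i - t) :=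
        Finset.sum_le_sum fun i hi =>
          mul_le_mul_of_nonneg_right (hpc i) (sub_nonneg.mpr (htle i hi))
      have h2 : ∑ i ∈ T₀ᶜ, p i * (c i - t) ≤ 0 :=
        Finset.sum_nonpos fun i hi =>
          mul_nonpos_of_nonneg_of_nonpos (hp0 i)
            (sub_nonpos.mpr (hout i (Finset.mem_compl.mp hi)))
      linarith
    have e3 : ∑ i ∈ T₀, (1/(C:ℝ)) * (c i - t) = (∑ i ∈ T₀, c i)/C - t := by
      rw [← Finset.mul_sum, Finset.sum_sub_distrib, Finset.sum_const, hT₀card,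
        nsmul_eq_mul]
      field_simp
    linarith
  · -- upper bound over C-subsets
    rintro w ⟨T, hTcard, rfl⟩
    have hle := hT₀max T (Finset.mem_powersetCard.mpr ⟨Finset.subset_univ _, hTcard⟩)
    gcongr
end
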